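/- Let G be a maximal stabilizer group on N qubits such that every nonidentity element of G has support of size at least 5 (i.e., δ(G) ≥ 5). Then any traceless Hamiltonian Ĥ that is a sum of terms each acting nontrivially on at most 2 sites and satisfies Ĥ|ψ_G⟩ = 0 must be zero. Equivalently, no zero-energy stabilizer eigenstate of a nonzero two-body Hamiltonian is in k-body microscopic thermal equilibrium for k ≥ 4. -/

import Mathlib

/-!
Pauli strings on the qubits `V` correspond to vectors of `(𝔽₂²)^V`, and two strings commute
exactly when their vectors are orthogonal for the standard symplectic form. The Pauli strings of a
maximal stabilizer group `G` form an isotropic set of the largest possible size `2 ^ |V|`, so a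
string commuting with all of `G` is, up to sign, in `G`. Hence a nonidentity string of support
smaller than `δ(G)` anticommutes with some element of `G`, and its expectation value in the
stabilizer state vanishes. If `H = ∑ h_Q Q` is two-body and `H ψ = 0`, then for each string `P`,
`0 = ⟨ψ|P H|ψ⟩ = h_P`: every other term is the expectation of a nonidentity string `P Q` of
support at most `4 < δ(G)`.
-/

open Matrix Complex BigOperators
open scoped Classical

noncomputable section

/-- Single-qubit Pauli matrices: I, X, Y, Z. -/
def pauli1 : Fin 4 → Matrix (Fin 2) (Fin 2) ℂ
  | 0 => 1
  | 1 => !![0, 1; 1, 0]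
  | 2 => !![0, -Complex.I; Complex.I, 0]
  | 3 => !![1, 0; 0, -1]

/-- Operators on an N-qubit system with sites indexed by `V`. -/
abbrev QOp (V : Type*) := Matrix (V → Fin 2) (V → Fin 2) ℂ

/-- The prefactor-1 Pauli string with single-site labels `p`. -/
def pauliOp {V : Type*} [Fintype V] (p : V → Fin 4) : QOp V :=
  Matrix.of fun x y => ∏ i, pauli1 (p i) (x i) (y i)

/-- Support of a Pauli string: sites where the tensor factor is not the identity. -/
def psupp {V : Type*} [Fintype V] (p : V → Fin 4) : Finset V :=
  Finset.univ.filter fun i => p i ≠ 0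

/-- Allowed phases of Pauli group elements. -/
def isPhase (a : ℂ) : Prop := a = 1 ∨ a = -1 ∨ a = Complex.I ∨ a = -Complex.I

/-- A maximal stabilizer group on qubits indexed by `V`: an abelian set of
prefactor-`±1` Pauli strings, closed under multiplication, containing `I`,
not containing `-I`, of cardinality `2 ^ |V|`. -/
structure MaxStabilizer (V : Type*) [Fintype V] [DecidableEq V] where
  carrier : Finset (QOp V)
  mem_pauli : ∀ g ∈ carrier, ∃ (c : ℂ) (p : V → Fin 4), (c = 1 ∨ c = -1) ∧ g = c • pauliOp p
  one_mem : (1 : QOp V) ∈ carrier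
  mul_mem : ∀ g ∈ carrier, ∀ h ∈ carrier, g * h ∈ carrier
  mul_comm' : ∀ g ∈ carrier, ∀ h ∈ carrier, g * h = h * g
  neg_one_not_mem : (-1 : QOp V) ∉ carrier
  card_eq : carrier.card = 2 ^ Fintype.card V

/-- `ψ` is the stabilizer state of `G`: a normalized common `+1`-eigenvector of all
elements of `G`. -/
def IsStabState {V : Type*} [Fintype V] [DecidableEq V] (G : MaxStabilizer V)
    (ψ : (V → Fin 2) → ℂ) : Prop :=
  (∀ g ∈ G.carrier, Matrix.mulVec g ψ = ψ) ∧ ∑ x, starRingEnd ℂ (ψ x) * ψ x = 1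

/-- The projector `|ψ⟩⟨ψ|` onto a state `ψ`. -/
def projOf {V : Type*} (ψ : (V → Fin 2) → ℂ) : QOp V :=
  Matrix.vecMulVec ψ fun x => starRingEnd ℂ (ψ x)

/-- Reduced density matrix (partial trace over the complement of `A`). -/
def reduced {V : Type*} [Fintype V] [DecidableEq V] (ρ : QOp V) (A : Finset V) :
    Matrix ({i // i ∈ A} → Fin 2) ({i // i ∈ A} → Fin 2) ℂ :=
  Matrix.of fun a b => ∑ c : {i // i ∉ A} → Fin 2,
    ρ (fun i => if h : i ∈ A then a ⟨i, h⟩ else c ⟨i, h⟩)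
      (fun i => if h : i ∈ A then b ⟨i, h⟩ else c ⟨i, h⟩)

/-- `δ(G)`: minimum support size over nonidentity elements of `G`. -/
def sdelta {V : Type*} [Fintype V] [DecidableEq V] (G : MaxStabilizer V) : ℕ :=
  sInf {k | ∃ (c : ℂ) (p : V → Fin 4), (c = 1 ∨ c = -1) ∧ c • pauliOp p ∈ G.carrier ∧
    c • pauliOp p ≠ 1 ∧ (psupp p).card = k}

open Finset

lemma LinearMap.BilinForm.card_sq_le_of_isotropic {K V : Type*} [Field K] [Fintype K]
    [AddCommGroup V] [Module K V] [Fintype V] {B : LinearMap.BilinForm K V}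
    (hB : B.Nondegenerate) {S : Finset V} (hS : ∀ x ∈ S, ∀ y ∈ S, B x y = 0) :
    S.card ^ 2 ≤ Fintype.card V := by
  set W := Submodule.span K (S : Set V)
  have hWW : W ≤ B.orthogonal W := Submodule.span_le.2 fun y hy => by
    refine LinearMap.BilinForm.mem_orthogonal_iff.2 fun x hx => ?_
    have : W ≤ LinearMap.ker (B.flip y) := Submodule.span_le.2 fun x' hx' => hS x' hx' y hy
    exact this hx
  have hdim : 2 * Module.finrank K W ≤ Module.finrank K V := by
    have := Submodule.finrank_mono hWW
    rw [LinearMap.BilinForm.finrank_orthogonal hB] at this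
    omega
  have hcard : S.card ≤ Fintype.card W := by
    rw [← Fintype.card_coe S]
    exact Fintype.card_le_of_injective (fun x => ⟨x, Submodule.subset_span x.2⟩)
      fun x y h => Subtype.ext (congrArg Subtype.val h :)
  calc S.card ^ 2 ≤ Fintype.card W ^ 2 := Nat.pow_le_pow_left hcard 2
    _ = Fintype.card K ^ (2 * Module.finrank K W) := by
      rw [Module.card_eq_pow_finrank (K := K) (V := W), ← pow_mul, mul_comm]
    _ ≤ Fintype.card K ^ Module.finrank K V := Nat.pow_le_pow_right Fintype.card_pos hdim
    _ = Fintype.card V := Module.card_eq_pow_finrank.symm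

lemma Matrix.dotProduct_mulVec_eq_zero_of_anticommute {n 𝕜 : Type*} [Fintype n] [Field 𝕜]
    [StarRing 𝕜] [CharZero 𝕜] {A g : Matrix n n 𝕜} {ψ : n → 𝕜} (hg : g.IsHermitian)
    (hψ : g *ᵥ ψ = ψ) (hAg : A * g = -(g * A)) :
    star ψ ⬝ᵥ A *ᵥ ψ = 0 := by
  have hself : star ψ ⬝ᵥ A *ᵥ ψ = -(star ψ ⬝ᵥ A *ᵥ ψ) := calc
    star ψ ⬝ᵥ A *ᵥ ψ = star ψ ⬝ᵥ (A * g) *ᵥ ψ := by rw [← mulVec_mulVec, hψ]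
    _ = -(star (g *ᵥ ψ) ⬝ᵥ A *ᵥ ψ) := by
      rw [hAg, neg_mulVec, dotProduct_neg, ← mulVec_mulVec, dotProduct_mulVec, star_mulVec, hg.eq]
    _ = -(star ψ ⬝ᵥ A *ᵥ ψ) := by rw [hψ]
  exact self_eq_neg.1 hself

def symplecticForm (V R : Type*) [Fintype V] [CommRing R] :
    LinearMap.BilinForm R (V → R × R) :=
  ∑ i : V, ((LinearMap.mul R R).compl₁₂ (LinearMap.fst R R R ∘ₗ LinearMap.proj i)
      (LinearMap.snd R R R ∘ₗ LinearMap.proj i) +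
    (LinearMap.mul R R).compl₁₂ (LinearMap.snd R R R ∘ₗ LinearMap.proj i)
      (LinearMap.fst R R R ∘ₗ LinearMap.proj i))

section Symplectic

variable {V R : Type*} [Fintype V] [CommRing R]

lemma symplecticForm_apply (u v : V → R × R) :
    symplecticForm V R u v = ∑ i, ((u i).1 * (v i).2 + (u i).2 * (v i).1) := by
  simp [symplecticForm]

lemma symplecticForm_isSymm : (symplecticForm V R).IsSymm :=
  ⟨fun u v => by simp only [symplecticForm_apply, mul_comm, add_comm]⟩

lemma symplecticForm_nondegenerate [DecidableEq V] : (symplecticForm V R).Nondegenerate := by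
  refine ((symplecticForm_isSymm (V := V) (R := R)).isRefl.nondegenerate_iff_separatingLeft).2
    fun u hu => ?_
  ext i
  · simpa [symplecticForm_apply, Pi.single_apply, apply_ite] using hu (Pi.single i (0, 1))
  · simpa [symplecticForm_apply, Pi.single_apply, apply_ite] using hu (Pi.single i (1, 0))

end Symplectic

lemma ZMod.two_cases : ∀ x : ZMod 2, x = 0 ∨ x = 1 := by
  decide

def signChar : AddChar (ZMod 2) ℂ where
  toFun x := if x = 0 then 1 else -1
  map_zero_eq_one' := rfl
  map_add_eq_mul' a b := by
    have h : (1 + 1 : ZMod 2) = 0 := rfl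
    rcases ZMod.two_cases a with rfl | rfl <;> rcases ZMod.two_cases b with rfl | rfl <;> simp [h]

lemma signChar_one : signChar 1 = -1 := rfl

lemma signChar_eq_one_iff {x : ZMod 2} : signChar x = 1 ↔ x = 0 := by
  rcases ZMod.two_cases x with rfl | rfl <;> norm_num [signChar_one]

lemma signChar_sum {ι : Type*} (s : Finset ι) (f : ι → ZMod 2) :
    signChar (∑ i ∈ s, f i) = ∏ i ∈ s, signChar (f i) := by
  induction s using Finset.cons_induction with
  | empty => simp
  | cons a s ha ih => rw [sum_cons, prod_cons, AddChar.map_add_eq_mul, ih]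

def pauliPhase : Fin 4 → Fin 4 → ℂ
  | 1, 2 => I
  | 2, 1 => -I
  | 2, 3 => I
  | 3, 2 => -I
  | 3, 1 => I
  | 1, 3 => -I
  | _, _ => 1

lemma pauliPhase_self (a : Fin 4) : pauliPhase a a = 1 := by
  fin_cases a <;> rfl

/-- With the labels `I, X, Y, Z = 0, 1, 2, 3`, the product of two Pauli matrices is, up to a
phase, the Pauli matrix labelled by the bitwise xor of the labels. -/
lemma pauli1_mul (a b : Fin 4) :
    pauli1 a * pauli1 b = pauliPhase a b • pauli1 (a ^^^ b) := by
  fin_cases a <;> fin_cases b <;> ext i j <;> fin_cases i <;> fin_cases j <;>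
    simp [pauli1, pauliPhase]

lemma pauli1_isHermitian (a : Fin 4) : (pauli1 a).IsHermitian := by
  fin_cases a <;> ext i j <;> fin_cases i <;> fin_cases j <;> simp [pauli1]

lemma trace_pauli1 {a : Fin 4} (ha : a ≠ 0) : (pauli1 a).trace = 0 := by
  fin_cases a <;> simp_all [pauli1, Matrix.trace_fin_two]

def pauliVec : Fin 4 → ZMod 2 × ZMod 2
  | 0 => (0, 0)
  | 1 => (1, 0)
  | 2 => (1, 1)
  | 3 => (0, 1)

lemma fin_four_eq_of_xor_eq_zero : ∀ {a b : Fin 4}, a ^^^ b = 0 → a = b := by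
  decide

lemma pauliVec_injective : Function.Injective pauliVec := by
  decide

lemma pauliPhase_comm (a b : Fin 4) :
    pauliPhase a b = signChar ((pauliVec a).1 * (pauliVec b).2 + (pauliVec a).2 * (pauliVec b).1) *
      pauliPhase b a := by
  fin_cases a <;> fin_cases b <;>
    simp [pauliPhase, pauliVec, signChar_one, show (1 + 1 : ZMod 2) = 0 from rfl]

section PauliString

variable {V : Type*} [Fintype V]

lemma pauliOp_isHermitian (p : V → Fin 4) : (pauliOp p).IsHermitian := by
  ext x y
  simpa [pauliOp] using prod_congr rfl fun i _ => congrFun₂ (pauli1_isHermitian (p i)) (x i) (y i)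

lemma pauliOp_zero : pauliOp (0 : V → Fin 4) = 1 := by
  ext x y
  simp [pauliOp, pauli1, Matrix.one_apply, prod_boole, funext_iff]

variable [DecidableEq V]

lemma psupp_xor_subset (p q : V → Fin 4) :
    psupp (fun i => p i ^^^ q i) ⊆ psupp p ∪ psupp q := by
  intro i
  simp only [psupp, mem_filter, mem_univ, true_and, mem_union]
  contrapose!
  rintro ⟨hp, hq⟩
  simp [hp, hq]

lemma trace_pauliOp {p : V → Fin 4} (hp : p ≠ 0) : (pauliOp p).trace = 0 := by
  obtain ⟨i, hi⟩ := Function.ne_iff.1 hp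
  simp only [Matrix.trace, Matrix.diag, pauliOp, Matrix.of_apply]
  rw [← Fintype.prod_sum (fun i t => pauli1 (p i) t t)]
  exact prod_eq_zero (mem_univ i) (trace_pauli1 hi)

def stringPhase (p q : V → Fin 4) : ℂ := ∏ i, pauliPhase (p i) (q i)

lemma pauliOp_mul (p q : V → Fin 4) :
    pauliOp p * pauliOp q = stringPhase p q • pauliOp (fun i => p i ^^^ q i) := by
  ext x y
  have hsite (i : V) : ∑ t, pauli1 (p i) (x i) t * pauli1 (q i) t (y i) =
      pauliPhase (p i) (q i) * pauli1 (p i ^^^ q i) (x i) (y i) := by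
    simpa [Matrix.mul_apply] using congrFun₂ (pauli1_mul (p i) (q i)) (x i) (y i)
  simp only [Matrix.mul_apply, pauliOp, Matrix.of_apply, Matrix.smul_apply, smul_eq_mul,
    stringPhase, ← prod_mul_distrib, ← hsite, Fintype.prod_sum]

lemma pauliOp_mul_self (p : V → Fin 4) : pauliOp p * pauliOp p = 1 := by
  have hxor : (fun i => p i ^^^ p i) = 0 := by ext i; simp
  rw [pauliOp_mul, hxor, pauliOp_zero]
  simp [stringPhase, pauliPhase_self]

lemma pauliOp_mul_comm (p q : V → Fin 4) :
    pauliOp p * pauliOp q =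
      signChar (symplecticForm V (ZMod 2) (pauliVec ∘ p) (pauliVec ∘ q)) •
        (pauliOp q * pauliOp p) := by
  have hxor : (fun i => q i ^^^ p i) = fun i => p i ^^^ q i := funext fun i => Fin.xor_comm _ _
  rw [pauliOp_mul, pauliOp_mul, smul_smul, hxor, symplecticForm_apply, signChar_sum, stringPhase,
    stringPhase, ← prod_mul_distrib]
  congr 1
  exact prod_congr rfl fun i _ => pauliPhase_comm (p i) (q i)

lemma commute_pauliOp_iff {p q : V → Fin 4} :
    Commute (pauliOp p) (pauliOp q) ↔
      symplecticForm V (ZMod 2) (pauliVec ∘ p) (pauliVec ∘ q) = 0 := by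
  rw [← signChar_eq_one_iff]
  refine ⟨fun h => ?_, fun h => by rw [Commute, SemiconjBy, pauliOp_mul_comm, h, one_smul]⟩
  have hunit : pauliOp q * pauliOp p * (pauliOp p * pauliOp q) = 1 := by
    rw [mul_assoc, ← mul_assoc (pauliOp p), pauliOp_mul_self, one_mul, pauliOp_mul_self]
  have hne : pauliOp q * pauliOp p ≠ 0 := left_ne_zero_of_mul_eq_one hunit
  exact smul_left_injective ℂ hne
    ((pauliOp_mul_comm p q).symm.trans (h.eq.trans (one_smul ℂ _).symm))

end PauliString

namespace MaxStabilizer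

variable {V : Type*} [Fintype V] [DecidableEq V] (G : MaxStabilizer V)

def pauliStrings : Finset (V → Fin 4) :=
  univ.filter fun p => pauliOp p ∈ G.carrier ∨ -pauliOp p ∈ G.carrier

variable {G}

lemma mem_pauliStrings {p : V → Fin 4} :
    p ∈ G.pauliStrings ↔ pauliOp p ∈ G.carrier ∨ -pauliOp p ∈ G.carrier := by
  simp [pauliStrings]

lemma neg_pauliOp_notMem {p : V → Fin 4} (hp : pauliOp p ∈ G.carrier) :
    -pauliOp p ∉ G.carrier := fun hn =>
  G.neg_one_not_mem (by simpa [pauliOp_mul_self] using G.mul_mem _ hp _ hn)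

variable (G) in
lemma two_pow_card_le_card_pauliStrings : 2 ^ Fintype.card V ≤ G.pauliStrings.card := by
  rw [← G.card_eq]
  refine card_le_card_of_surjOn
    (fun p => if pauliOp p ∈ G.carrier then pauliOp p else -pauliOp p) fun g hg => ?_
  rw [mem_coe] at hg
  obtain ⟨c, p, rfl | rfl, rfl⟩ := G.mem_pauli g hg
  · rw [one_smul] at hg ⊢
    exact ⟨p, mem_pauliStrings.2 (Or.inl hg), by simp [hg]⟩
  · rw [neg_one_smul] at hg ⊢
    have hp : pauliOp p ∉ G.carrier := fun hp => neg_pauliOp_notMem hp hg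
    exact ⟨p, mem_pauliStrings.2 (Or.inr hg), by simp [hp]⟩

lemma commute_of_mem_pauliStrings {p q : V → Fin 4} (hp : p ∈ G.pauliStrings)
    (hq : q ∈ G.pauliStrings) : Commute (pauliOp p) (pauliOp q) := by
  rcases mem_pauliStrings.1 hp with hp | hp <;> rcases mem_pauliStrings.1 hq with hq | hq <;>
    simpa [Commute, SemiconjBy] using G.mul_comm' _ hp _ hq

lemma mem_pauliStrings_of_forall_commute {r : V → Fin 4}
    (hr : ∀ p ∈ G.pauliStrings, Commute (pauliOp p) (pauliOp r)) : r ∈ G.pauliStrings := by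
  by_contra hr'
  -- otherwise `S` is an isotropic set of `2 ^ |V| + 1` vectors, too many for `(𝔽₂²)^V`
  set S := (insert r G.pauliStrings).image (pauliVec ∘ ·)
  have hiso : ∀ x ∈ S, ∀ y ∈ S, symplecticForm V (ZMod 2) x y = 0 := by
    simp only [S, mem_image, mem_insert]
    rintro _ ⟨p, hp, rfl⟩ _ ⟨q, hq, rfl⟩
    apply commute_pauliOp_iff.1
    rcases hp with rfl | hp <;> rcases hq with rfl | hq
    · exact Commute.refl _
    · exact (hr q hq).symm
    · exact hr p hp
    · exact commute_of_mem_pauliStrings hp hq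
  have hS : S.card = G.pauliStrings.card + 1 := by
    rw [card_image_of_injective _ pauliVec_injective.comp_left, card_insert_of_notMem hr']
  have hbound :=
    LinearMap.BilinForm.card_sq_le_of_isotropic symplecticForm_nondegenerate hiso
  have hcardG := G.two_pow_card_le_card_pauliStrings
  rw [hS, Fintype.card_fun, Fintype.card_prod, ZMod.card, mul_pow] at hbound
  nlinarith [Nat.mul_le_mul hcardG hcardG]

lemma exists_not_commute_of_card_psupp_lt {r : V → Fin 4} (hr0 : r ≠ 0)
    (hr : (psupp r).card < sdelta G) :
    ∃ p ∈ G.pauliStrings, ¬Commute (pauliOp p) (pauliOp r) := by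
  by_contra! h
  obtain ⟨c, hc, hcr⟩ : ∃ c : ℂ, (c = 1 ∨ c = -1) ∧ c • pauliOp r ∈ G.carrier := by
    rcases mem_pauliStrings.1 (G.mem_pauliStrings_of_forall_commute h) with hr | hr
    · exact ⟨1, Or.inl rfl, by rwa [one_smul]⟩
    · exact ⟨-1, Or.inr rfl, by rwa [neg_one_smul]⟩
  have hne : c • pauliOp r ≠ 1 := fun h1 => by
    simpa [trace_pauliOp hr0] using (congrArg Matrix.trace h1).symm
  exact hr.not_ge (Nat.sInf_le ⟨c, r, hc, hcr, hne, rfl⟩)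

end MaxStabilizer

namespace IsStabState

variable {V : Type*} [Fintype V] [DecidableEq V] {G : MaxStabilizer V} {ψ : (V → Fin 2) → ℂ}

lemma dotProduct_pauliOp_mulVec_eq_zero (hψ : IsStabState G ψ) {r : V → Fin 4} (hr0 : r ≠ 0)
    (hr : (psupp r).card < sdelta G) :
    star ψ ⬝ᵥ pauliOp r *ᵥ ψ = 0 := by
  obtain ⟨p, hp, hpr⟩ := MaxStabilizer.exists_not_commute_of_card_psupp_lt hr0 hr
  have hanti : pauliOp r * pauliOp p = -(pauliOp p * pauliOp r) := by
    rw [commute_pauliOp_iff] at hpr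
    rw [pauliOp_mul_comm p r, (ZMod.two_cases _).resolve_left hpr, signChar_one, neg_one_smul,
      neg_neg]
  rcases MaxStabilizer.mem_pauliStrings.1 hp with hg | hg
  · exact Matrix.dotProduct_mulVec_eq_zero_of_anticommute (pauliOp_isHermitian p) (hψ.1 _ hg)
      hanti
  · exact Matrix.dotProduct_mulVec_eq_zero_of_anticommute (pauliOp_isHermitian p).neg
      (hψ.1 _ hg) (by rw [mul_neg, neg_mul, hanti])

lemma dotProduct_pauliOp_mul_mulVec_eq_zero (hψ : IsStabState G ψ) {p q : V → Fin 4}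
    (hpq : p ≠ q) (hcard : (psupp p).card + (psupp q).card < sdelta G) :
    star ψ ⬝ᵥ (pauliOp p * pauliOp q) *ᵥ ψ = 0 := by
  have hxor : (fun i => p i ^^^ q i) ≠ 0 := fun h =>
    hpq (funext fun i => fin_four_eq_of_xor_eq_zero (congrFun h i))
  have hsupp := (card_le_card (psupp_xor_subset p q)).trans (card_union_le _ _)
  rw [pauliOp_mul, smul_mulVec, dotProduct_smul,
    hψ.dotProduct_pauliOp_mulVec_eq_zero hxor (by omega), smul_zero]

end IsStabState

theorem stmt7_general (N : ℕ) (G : MaxStabilizer (Fin N)) (ψ : (Fin N → Fin 2) → ℂ)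
    (hψ : IsStabState G ψ) (hδ : 5 ≤ sdelta G) (h : (Fin N → Fin 4) → ℂ)
    (hloc : ∀ P, h P ≠ 0 → (psupp P).card ≤ 2)
    (hann : (∑ P : Fin N → Fin 4, h P • pauliOp P).mulVec ψ = 0) :
    (∑ P : Fin N → Fin 4, h P • pauliOp P) = 0 := by
  suffices hzero : ∀ P, h P = 0 by simp [hzero]
  intro P
  by_contra hP
  have hterm (Q : Fin N → Fin 4) (hQP : Q ≠ P) :
      star ψ ⬝ᵥ (pauliOp P * h Q • pauliOp Q) *ᵥ ψ = 0 := by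
    rcases eq_or_ne (h Q) 0 with hQ | hQ
    · simp [hQ]
    · rw [Matrix.mul_smul, smul_mulVec, dotProduct_smul,
        hψ.dotProduct_pauliOp_mul_mulVec_eq_zero hQP.symm (by linarith [hloc P hP, hloc Q hQ]),
        smul_zero]
  have hcoeff : star ψ ⬝ᵥ (pauliOp P * ∑ Q, h Q • pauliOp Q) *ᵥ ψ = h P := by
    rw [mul_sum, sum_mulVec, dotProduct_sum, sum_eq_single P (fun Q _ => hterm Q) (by simp),
      Matrix.mul_smul, pauliOp_mul_self, smul_mulVec, one_mulVec, dotProduct_smul, smul_eq_mul,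
      show star ψ ⬝ᵥ ψ = 1 from hψ.2, mul_one]
  rw [← mulVec_mulVec, hann, mulVec_zero, dotProduct_zero] at hcoeff
  exact hP hcoeff.symm

/-- No-go: if `δ(G) ≥ 5` (so the stabilizer state is in 4-body MITE), any
traceless Hamiltonian whose Pauli terms act on at most 2 sites and which annihilates the
stabilizer state must vanish. -/
theorem stmt7 (N : ℕ) (G : MaxStabilizer (Fin N)) (ψ : (Fin N → Fin 2) → ℂ)
    (hψ : IsStabState G ψ) (hδ : 5 ≤ sdelta G) (h : (Fin N → Fin 4) → ℂ)
    (hloc : ∀ P, h P ≠ 0 → (psupp P).card ≤ 2)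
    (htr : h (fun _ => 0) = 0)
    (hann : (∑ P : Fin N → Fin 4, h P • pauliOp P).mulVec ψ = 0) :
    (∑ P : Fin N → Fin 4, h P • pauliOp P) = 0 :=
  stmt7_general N G ψ hψ hδ h hloc hann
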